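/- arXiv:2007.07024 — 3 statements merged into one kernel-verified Lean document; each statement's English description precedes it below -/
import Mathlib

section
/- Let W : ℝ → ℝ be continuous and nonnegative, α < β, ε > 0, and let q_ε : [0, η_ε] → [α, β] be the inverse of ψ_ε(t) = ∫_α^t ε/√(ε^{3/2} + 2W(s)) ds, where η_ε = ψ_ε(β). Then q_ε is continuously differentiable and satisfies ε·q_ε′(t) = √(ε^{3/2} + 2W(q_ε(t))) for all t ∈ [0, η_ε]. -/
open Set Filter Topology intervalIntegral

/-- Let `W : ℝ → ℝ` be continuous and nonnegative, `α < β`, `ε > 0`, and let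
`q_ε : [0, η_ε] → [α, β]` be the inverse of
`ψ_ε(t) = ∫_α^t ε/√(ε^{3/2} + 2W(s)) ds`, where `η_ε = ψ_ε(β)`.
Then `q_ε` is continuously differentiable on `[0, η_ε]` and satisfies the ODE
`ε·q_ε′(t) = √(ε^{3/2} + 2W(q_ε(t)))` for all `t ∈ [0, η_ε]`. -/
theorem modica_inverse_C1_and_ODE (W : ℝ → ℝ) (hWc : Continuous W)
    (hW0 : ∀ s, 0 ≤ W s) (α β ε ηε : ℝ) (hαβ : α < β) (hε : 0 < ε)
    (hηε : ηε = ∫ s in α..β, ε / Real.sqrt (ε ^ ((3 : ℝ) / 2) + 2 * W s))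
    (q : ℝ → ℝ)
    (hq_mem : ∀ t ∈ Set.Icc (0 : ℝ) ηε, q t ∈ Set.Icc α β)
    (hq_inv : ∀ t ∈ Set.Icc α β,
      q (∫ s in α..t, ε / Real.sqrt (ε ^ ((3 : ℝ) / 2) + 2 * W s)) = t) :
    ContDiffOn ℝ 1 q (Set.Icc (0 : ℝ) ηε) ∧
      ∀ t ∈ Set.Icc (0 : ℝ) ηε,
        HasDerivWithinAt q (Real.sqrt (ε ^ ((3 : ℝ) / 2) + 2 * W (q t)) / ε)
          (Set.Icc (0 : ℝ) ηε) t := by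
  set f : ℝ → ℝ := fun s => ε / Real.sqrt (ε ^ ((3 : ℝ) / 2) + 2 * W s) with hf_def
  have hεpow : (0 : ℝ) < ε ^ ((3 : ℝ) / 2) := Real.rpow_pos_of_pos hε _
  have hden_pos : ∀ s, 0 < Real.sqrt (ε ^ ((3 : ℝ) / 2) + 2 * W s) := fun s =>
    Real.sqrt_pos.mpr (by nlinarith [hW0 s])
  have hf_pos : ∀ s, 0 < f s := fun s => div_pos hε (hden_pos s)
  have hf_cont : Continuous f := by
    apply continuous_const.div
    · exact Real.continuous_sqrt.comp (continuous_const.add (continuous_const.mul hWc))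
    · exact fun s => (hden_pos s).ne'
  set ψ : ℝ → ℝ := fun t => ∫ s in α..t, f s with hψ_def
  have hψ_deriv : ∀ x, HasDerivAt ψ (f x) x := fun x =>
    (hf_cont.integral_hasStrictDerivAt α x).hasDerivAt
  have hψ_cont : Continuous ψ :=
    continuous_iff_continuousAt.mpr fun x => (hψ_deriv x).continuousAt
  have hψ_mono : StrictMono ψ := strictMono_of_deriv_pos fun x => by
    rw [(hψ_deriv x).deriv]; exact hf_pos x
  have hψα : ψ α = 0 := intervalIntegral.integral_same
  have hψβ : ψ β = ηε := hηε.symm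
  -- `ψ (q t) = t` on `[0, ηε]`
  have hψq : ∀ t ∈ Set.Icc (0 : ℝ) ηε, ψ (q t) = t := by
    intro t ht
    have : t ∈ ψ '' Set.Icc α β := by
      apply intermediate_value_Icc hαβ.le hψ_cont.continuousOn
      rw [hψα, hψβ]; exact ht
    obtain ⟨x, hx, hxt⟩ := this
    have h2 : q (ψ x) = x := hq_inv x hx
    rw [hxt] at h2
    rw [h2, hxt]
  -- uniform positive lower bound on `f` over `[α, β]`
  obtain ⟨s₀, hs₀, hmin⟩ := isCompact_Icc.exists_isMinOn (Set.nonempty_Icc.mpr hαβ.le)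
    hf_cont.continuousOn
  set m : ℝ := f s₀ with hm_def
  have hm_pos : 0 < m := hf_pos s₀
  have hm_le : ∀ s ∈ Set.Icc α β, m ≤ f s := fun s hs => hmin hs
  have hψ_sub : ∀ x y : ℝ, ψ y - ψ x = ∫ s in x..y, f s := fun x y =>
    intervalIntegral.integral_interval_sub_left (hf_cont.intervalIntegrable _ _)
      (hf_cont.intervalIntegrable _ _)
  have hgap : ∀ x ∈ Set.Icc α β, ∀ y ∈ Set.Icc α β, x ≤ y → m * (y - x) ≤ ψ y - ψ x := by
    intro x hx y hy hxy
    rw [hψ_sub]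
    have h1 : (∫ s in x..y, m) ≤ ∫ s in x..y, f s := by
      apply intervalIntegral.integral_mono_on hxy (intervalIntegrable_const)
        (hf_cont.intervalIntegrable _ _)
      intro s hs
      exact hm_le s ⟨hx.1.trans hs.1, hs.2.trans hy.2⟩
    rwa [intervalIntegral.integral_const, smul_eq_mul, mul_comm] at h1
  -- Lipschitz continuity of q
  have hkey : ∀ t1 ∈ Set.Icc (0 : ℝ) ηε, ∀ t2 ∈ Set.Icc (0 : ℝ) ηε, q t2 ≤ q t1 →
      q t1 - q t2 ≤ m⁻¹ * (t1 - t2) := by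
    intro t1 h1 t2 h2 hle
    have hg := hgap (q t2) (hq_mem t2 h2) (q t1) (hq_mem t1 h1) hle
    rw [hψq t1 h1, hψq t2 h2] at hg
    rw [inv_mul_eq_div, le_div_iff₀ hm_pos]
    nlinarith
  have hlip : ∀ t1 ∈ Set.Icc (0 : ℝ) ηε, ∀ t2 ∈ Set.Icc (0 : ℝ) ηε,
      |q t1 - q t2| ≤ m⁻¹ * |t1 - t2| := by
    intro t1 h1 t2 h2
    rcases le_total (q t2) (q t1) with h | h
    · have := hkey t1 h1 t2 h2 h
      calc |q t1 - q t2| = q t1 - q t2 := abs_of_nonneg (by linarith)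
        _ ≤ m⁻¹ * (t1 - t2) := this
        _ ≤ m⁻¹ * |t1 - t2| := by
            apply mul_le_mul_of_nonneg_left (le_abs_self _) (le_of_lt (inv_pos.mpr hm_pos))
    · have := hkey t2 h2 t1 h1 h
      calc |q t1 - q t2| = q t2 - q t1 := by rw [abs_sub_comm]; exact abs_of_nonneg (by linarith)
        _ ≤ m⁻¹ * (t2 - t1) := this
        _ ≤ m⁻¹ * |t1 - t2| := by
            rw [abs_sub_comm]
            apply mul_le_mul_of_nonneg_left (le_abs_self _) (le_of_lt (inv_pos.mpr hm_pos))
  have hq_cont : ContinuousOn q (Set.Icc (0 : ℝ) ηε) := by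
    apply LipschitzOnWith.continuousOn (K := Real.toNNReal m⁻¹)
    apply LipschitzOnWith.of_dist_le_mul
    intro x hx y hy
    rw [Real.dist_eq, Real.dist_eq, Real.coe_toNNReal _ (le_of_lt (inv_pos.mpr hm_pos))]
    exact hlip x hx y hy
  -- the main derivative statement
  have hmain : ∀ t ∈ Set.Icc (0 : ℝ) ηε,
      HasDerivWithinAt q (Real.sqrt (ε ^ ((3 : ℝ) / 2) + 2 * W (q t)) / ε)
        (Set.Icc (0 : ℝ) ηε) t := by
    intro t ht
    set x := q t with hx_def
    have hxmem := hq_mem t ht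
    have hψx : ψ x = t := hψq t ht
    rw [hasDerivWithinAt_iff_tendsto_slope]
    have hqt_ne : ∀ t' ∈ Set.Icc (0 : ℝ) ηε \ {t}, q t' ≠ x := by
      rintro t' ⟨ht', hne⟩ h
      apply hne
      have := hψq t' ht'
      rw [h, hψx] at this
      exact this.symm
    have h1 : Tendsto q (𝓝[Set.Icc (0 : ℝ) ηε \ {t}] t) (𝓝[{x}ᶜ] x) := by
      rw [tendsto_nhdsWithin_iff]
      constructor
      · exact ((hq_cont t ht).mono Set.diff_subset)
      · filter_upwards [self_mem_nhdsWithin] with t' ht'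
        exact hqt_ne t' ht'
    have h2 : Tendsto (slope ψ x) (𝓝[{x}ᶜ] x) (𝓝 (f x)) :=
      hasDerivAt_iff_tendsto_slope.mp (hψ_deriv x)
    have h3 : Tendsto (fun t' => (slope ψ x (q t'))⁻¹) (𝓝[Set.Icc (0 : ℝ) ηε \ {t}] t)
        (𝓝 (f x)⁻¹) := (h2.comp h1).inv₀ (hf_pos x).ne'
    have heq : ∀ t' ∈ Set.Icc (0 : ℝ) ηε \ {t}, (slope ψ x (q t'))⁻¹ = slope q t t' := by
      rintro t' ⟨ht', hne⟩
      have hψqt' : ψ (q t') = t' := hψq t' ht'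
      rw [slope_def_field, slope_def_field, hψqt', hψx, inv_div]
    have h4 : Tendsto (slope q t) (𝓝[Set.Icc (0 : ℝ) ηε \ {t}] t) (𝓝 (f x)⁻¹) := by
      apply h3.congr'
      filter_upwards [self_mem_nhdsWithin] with t' ht'
      exact heq t' ht'
    convert h4 using 2
    rw [hf_def]
    simp only []
    rw [inv_div]
  have hη_pos : 0 < ηε := by
    rw [← hψβ, ← hψα]
    exact hψ_mono hαβ
  have hUD : UniqueDiffOn ℝ (Set.Icc (0 : ℝ) ηε) := uniqueDiffOn_Icc hη_pos
  refine ⟨?_, hmain⟩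
  have hderiv_eq : ∀ t ∈ Set.Icc (0 : ℝ) ηε,
      derivWithin q (Set.Icc 0 ηε) t = Real.sqrt (ε ^ ((3 : ℝ) / 2) + 2 * W (q t)) / ε :=
    fun t ht => (hmain t ht).derivWithin (hUD t ht)
  have : (1 : WithTop ℕ∞) = 0 + 1 := by norm_num
  rw [this, contDiffOn_succ_iff_derivWithin hUD]
  refine ⟨fun t ht => ((hmain t ht).differentiableWithinAt).mono le_rfl, ?_, ?_⟩
  · intro h; simp at h
  · rw [contDiffOn_zero]
    apply ContinuousOn.congr _ hderiv_eq
    apply ContinuousOn.div_const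
    exact Real.continuous_sqrt.comp_continuousOn
      (continuousOn_const.add (continuousOn_const.mul (hWc.comp_continuousOn hq_cont)))
end

section
/- Let W : ℝ → ℝ be continuous and nonnegative, α < β, ε > 0, and let q_ε : [0, η_ε] → [α, β] with ε q_ε′ = √(ε^{3/2} + 2W(q_ε)) be as in the Modica construction. Then ∫_0^{η_ε} [ (ε/2) q_ε′(t)² + (1/ε) W(q_ε(t)) + ε^{1/2}/2 ] dt = ∫_α^β √(2W(s) + ε^{3/2}) ds. -/
/-- Energy identity for the one-dimensional Modica profile: if
`ε·q′(t) = √(ε^{3/2} + 2W(q(t)))` on `[0, η_ε]`, with `q(0) = α`, `q(η_ε) = β`,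
then
`∫_0^{η_ε} [(ε/2)q′(t)² + (1/ε)W(q(t)) + ε^{1/2}/2] dt = ∫_α^β √(2W(s) + ε^{3/2}) ds`. -/
theorem modica_profile_energy_identity (W : ℝ → ℝ) (hWc : Continuous W)
    (hW0 : ∀ s, 0 ≤ W s) (α β ε ηε : ℝ) (hαβ : α < β) (hε : 0 < ε)
    (hηε : 0 ≤ ηε) (q q' : ℝ → ℝ)
    (hq0 : q 0 = α) (hq1 : q ηε = β)
    (hq'cont : ContinuousOn q' (Set.Icc (0 : ℝ) ηε))
    (hderiv : ∀ t ∈ Set.Icc (0 : ℝ) ηε, HasDerivAt q (q' t) t)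
    (hODE : ∀ t ∈ Set.Icc (0 : ℝ) ηε,
      ε * q' t = Real.sqrt (ε ^ ((3 : ℝ) / 2) + 2 * W (q t))) :
    (∫ t in (0 : ℝ)..ηε,
        (ε / 2 * (q' t) ^ 2 + (1 / ε) * W (q t) + ε ^ ((1 : ℝ) / 2) / 2)) =
      ∫ s in α..β, Real.sqrt (2 * W s + ε ^ ((3 : ℝ) / 2)) := by
  have huIcc : Set.uIcc (0 : ℝ) ηε = Set.Icc 0 ηε := Set.uIcc_of_le hηε
  set g : ℝ → ℝ := fun s => Real.sqrt (2 * W s + ε ^ ((3 : ℝ) / 2)) with hg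
  have hgc : Continuous g := by
    exact Real.continuous_sqrt.comp (by continuity)
  have hsq : ε ^ ((1 : ℝ) / 2) * ε ^ ((1 : ℝ) / 2) = ε := by
    rw [← Real.rpow_add hε]; norm_num
  have hcube : ε ^ ((3 : ℝ) / 2) = ε * ε ^ ((1 : ℝ) / 2) := by
    rw [show (3:ℝ)/2 = 1 + 1/2 by norm_num, Real.rpow_add hε, Real.rpow_one]
  have key : ∀ t ∈ Set.uIcc (0 : ℝ) ηε,
      ε / 2 * (q' t) ^ 2 + (1 / ε) * W (q t) + ε ^ ((1 : ℝ) / 2) / 2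
        = q' t • (g ∘ q) t := by
    intro t ht
    rw [huIcc] at ht
    have h1 := hODE t ht
    have hnn : 0 ≤ ε ^ ((3 : ℝ) / 2) + 2 * W (q t) := by
      have := hW0 (q t)
      have := Real.rpow_nonneg hε.le ((3:ℝ)/2)
      linarith
    have h2 : (ε * q' t) ^ 2 = ε ^ ((3 : ℝ) / 2) + 2 * W (q t) := by
      rw [h1, Real.sq_sqrt hnn]
    simp only [g, Function.comp, smul_eq_mul]
    rw [show (2 : ℝ) * W (q t) + ε ^ ((3:ℝ)/2) = ε ^ ((3:ℝ)/2) + 2 * W (q t) by ring,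
      ← h1]
    field_simp
    nlinarith [h2, hε]
  calc (∫ t in (0 : ℝ)..ηε,
        (ε / 2 * (q' t) ^ 2 + (1 / ε) * W (q t) + ε ^ ((1 : ℝ) / 2) / 2))
      = ∫ t in (0 : ℝ)..ηε, q' t • (g ∘ q) t := by
        apply intervalIntegral.integral_congr
        intro t ht; exact key t ht
    _ = ∫ s in (q 0)..(q ηε), g s := by
        apply intervalIntegral.integral_comp_smul_deriv
        · intro t ht; exact hderiv t (huIcc ▸ ht)
        · rw [huIcc]; exact hq'cont
        · exact hgc
    _ = ∫ s in α..β, Real.sqrt (2 * W s + ε ^ ((3 : ℝ) / 2)) := by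
        rw [hq0, hq1]
end

section
/- Let W : ℝ → ℝ be continuous nonnegative and suppose there exist c₂ > 0, t₀ ≥ 1 and exponents 2 < p₁, p₁ ≤ p₂ ≤ 2(p₁ − 1) with W(t) ≤ c₂|t|^{p₂} for |t| ≥ t₀. Define φ(t) = ∫_0^t √(2W(s)) ds. Then there exist constants c₃, c₄ ≥ 0 such that |φ(t)| ≤ c₃ + c₄·W(t) for all t ∈ ℝ. -/
/-- If `W ≥ 0` is continuous with `c₁|t|^{p₁} ≤ W(t) ≤ c₂|t|^{p₂}` for
`|t| ≥ t₀ ≥ 1`, where `2 < p₁ ≤ p₂ ≤ 2(p₁ − 1)`, then the primitive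
`φ(t) = ∫_0^t √(2W(s)) ds` satisfies `|φ(t)| ≤ c₃ + c₄·W(t)` for all `t`. -/
theorem primitive_bound_by_potential (W : ℝ → ℝ) (hWc : Continuous W)
    (hW0 : ∀ t, 0 ≤ W t) (c₁ c₂ t₀ p₁ p₂ : ℝ)
    (hc₁ : 0 < c₁) (hc₂ : 0 < c₂) (ht₀ : 1 ≤ t₀)
    (hp₁ : 2 < p₁) (hp₁₂ : p₁ ≤ p₂) (hp₂ : p₂ ≤ 2 * (p₁ - 1))
    (hupper : ∀ t : ℝ, t₀ ≤ |t| → W t ≤ c₂ * |t| ^ p₂)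
    (hlower : ∀ t : ℝ, t₀ ≤ |t| → c₁ * |t| ^ p₁ ≤ W t) :
    ∃ c₃ c₄ : ℝ, 0 ≤ c₃ ∧ 0 ≤ c₄ ∧
      ∀ t : ℝ, |∫ s in (0 : ℝ)..t, Real.sqrt (2 * W s)| ≤ c₃ + c₄ * W t := by
  have hp₂0 : (0:ℝ) < p₂ := by linarith
  have ht₀0 : (0:ℝ) < t₀ := by linarith
  set f : ℝ → ℝ := fun s => Real.sqrt (2 * W s) with hfdef
  have hfc : Continuous f := Real.continuous_sqrt.comp (continuous_const.mul hWc)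
  have hfi : ∀ a b : ℝ, IntervalIntegrable f MeasureTheory.volume a b :=
    fun a b => hfc.intervalIntegrable a b
  set F : ℝ → ℝ := fun t => ∫ s in (0:ℝ)..t, f s with hFdef
  have hFc : Continuous F := intervalIntegral.continuous_primitive hfi 0
  obtain ⟨C, hC⟩ := (isCompact_Icc (a := -t₀) (b := t₀)).exists_bound_of_continuousOn
    hFc.continuousOn
  set A : ℝ := Real.sqrt (2 * c₂) with hAdef
  have hA : 0 ≤ A := Real.sqrt_nonneg _
  -- pointwise bound on f in the far region
  have hub : ∀ x : ℝ, t₀ ≤ |x| → f x ≤ A * |x| ^ (p₂ / 2) := by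
    intro x hx
    have h1 : 2 * W x ≤ 2 * c₂ * |x| ^ p₂ := by
      have := hupper x hx; linarith
    calc f x ≤ Real.sqrt (2 * c₂ * |x| ^ p₂) := Real.sqrt_le_sqrt h1
      _ = A * Real.sqrt (|x| ^ p₂) := Real.sqrt_mul (by positivity) _
      _ = A * |x| ^ (p₂ / 2) := by
          rw [Real.sqrt_eq_rpow, ← Real.rpow_mul (abs_nonneg x)]
          have h2 : p₂ * (1 / 2) = p₂ / 2 := by ring
          rw [h2]
  have hexp : p₂ / 2 + 1 ≤ p₁ := by linarith
  have hq0 : (0:ℝ) ≤ p₂ / 2 := by linarith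
  refine ⟨max C 0, A / c₁, le_max_right _ _, by positivity, ?_⟩
  intro t
  show |F t| ≤ max C 0 + A / c₁ * W t
  by_cases hcase : |t| ≤ t₀
  · have hmem : t ∈ Set.Icc (-t₀) t₀ := by
      rcases abs_le.mp hcase with ⟨h1, h2⟩; exact ⟨h1, h2⟩
    have := hC t hmem
    rw [Real.norm_eq_abs] at this
    have hW : 0 ≤ A / c₁ * W t := mul_nonneg (div_nonneg hA hc₁.le) (hW0 t)
    calc |F t| ≤ C := this
      _ ≤ max C 0 := le_max_left _ _
      _ ≤ max C 0 + A / c₁ * W t := by linarith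
  · push_neg at hcase
    -- far region: |t| > t₀
    have habs1 : 1 ≤ |t| := le_trans ht₀ hcase.le
    have habs0 : 0 < |t| := by linarith
    have hWt : c₁ * |t| ^ p₁ ≤ W t := hlower t hcase.le
    -- common final estimate
    have hfin : A * |t| ^ (p₂ / 2) * |t| ≤ A / c₁ * W t := by
      have h1 : A * |t| ^ (p₂ / 2) * |t| = A * |t| ^ (p₂ / 2 + 1) := by
        rw [Real.rpow_add_one (ne_of_gt habs0)]; ring
      have h2 : |t| ^ (p₂ / 2 + 1) ≤ |t| ^ p₁ :=
        Real.rpow_le_rpow_of_exponent_le habs1 hexp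
      rw [h1, div_mul_eq_mul_div, le_div_iff₀ hc₁]
      calc A * |t| ^ (p₂ / 2 + 1) * c₁ = c₁ * |t| ^ (p₂ / 2 + 1) * A := by ring
        _ ≤ c₁ * |t| ^ p₁ * A := by
            apply mul_le_mul_of_nonneg_right _ hA
            exact mul_le_mul_of_nonneg_left h2 hc₁.le
        _ ≤ W t * A := mul_le_mul_of_nonneg_right hWt hA
        _ = A * W t := by ring
    rcases le_or_gt 0 t with htpos | htneg
    · -- t > t₀
      have ht : t₀ < t := by rwa [abs_of_nonneg htpos] at hcase
      have hsplit : F t = F t₀ + ∫ s in t₀..t, f s :=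
        (intervalIntegral.integral_add_adjacent_intervals (hfi 0 t₀) (hfi t₀ t)).symm
      have hI : ‖∫ s in t₀..t, f s‖ ≤ (A * |t| ^ (p₂ / 2)) * |t - t₀| := by
        apply intervalIntegral.norm_integral_le_of_norm_le_const
        intro x hx
        rw [Set.uIoc_of_le ht.le] at hx
        have hx0 : 0 < x := lt_of_lt_of_le ht₀0 hx.1.le
        have hx1 : t₀ ≤ |x| := by rw [abs_of_pos hx0]; exact hx.1.le
        have hx2 : |x| ≤ |t| := by
          rw [abs_of_pos hx0, abs_of_nonneg htpos]; exact hx.2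
        rw [Real.norm_eq_abs, abs_of_nonneg (Real.sqrt_nonneg _)]
        calc f x ≤ A * |x| ^ (p₂ / 2) := hub x hx1
          _ ≤ A * |t| ^ (p₂ / 2) := by
              apply mul_le_mul_of_nonneg_left _ hA
              exact Real.rpow_le_rpow (abs_nonneg x) hx2 hq0
      have hFt₀ : |F t₀| ≤ C := by
        have := hC t₀ ⟨by linarith, le_refl _⟩
        rwa [Real.norm_eq_abs] at this
      have htt₀ : |t - t₀| ≤ |t| := by
        rw [abs_of_nonneg (by linarith), abs_of_nonneg htpos]; linarith
      rw [Real.norm_eq_abs] at hI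
      calc |F t| = |F t₀ + ∫ s in t₀..t, f s| := by rw [hsplit]
        _ ≤ |F t₀| + |∫ s in t₀..t, f s| := abs_add_le _ _
        _ ≤ C + (A * |t| ^ (p₂ / 2)) * |t| := by
            have : (A * |t| ^ (p₂ / 2)) * |t - t₀| ≤ (A * |t| ^ (p₂ / 2)) * |t| :=
              mul_le_mul_of_nonneg_left htt₀ (by positivity)
            linarith
        _ ≤ max C 0 + A / c₁ * W t := by
            have := le_max_left C 0; linarith
    · -- t < -t₀
      have ht : t < -t₀ := by
        rw [abs_of_neg htneg] at hcase; linarith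
      have hsplit : F t = F (-t₀) + ∫ s in (-t₀)..t, f s :=
        (intervalIntegral.integral_add_adjacent_intervals (hfi 0 (-t₀)) (hfi (-t₀) t)).symm
      have hI : ‖∫ s in (-t₀)..t, f s‖ ≤ (A * |t| ^ (p₂ / 2)) * |t - (-t₀)| := by
        apply intervalIntegral.norm_integral_le_of_norm_le_const
        intro x hx
        rw [Set.uIoc_of_ge ht.le] at hx
        have hx0 : x < 0 := lt_of_le_of_lt hx.2 (by linarith)
        have hx1 : t₀ ≤ |x| := by rw [abs_of_neg hx0]; linarith [hx.2]
        have hx2 : |x| ≤ |t| := by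
          rw [abs_of_neg hx0, abs_of_neg htneg]; linarith [hx.1]
        rw [Real.norm_eq_abs, abs_of_nonneg (Real.sqrt_nonneg _)]
        calc f x ≤ A * |x| ^ (p₂ / 2) := hub x hx1
          _ ≤ A * |t| ^ (p₂ / 2) := by
              apply mul_le_mul_of_nonneg_left _ hA
              exact Real.rpow_le_rpow (abs_nonneg x) hx2 hq0
      have hFt₀ : |F (-t₀)| ≤ C := by
        have := hC (-t₀) ⟨le_refl _, by linarith⟩
        rwa [Real.norm_eq_abs] at this
      have htt₀ : |t - (-t₀)| ≤ |t| := by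
        rw [abs_of_nonpos (by linarith), abs_of_neg htneg]; linarith
      rw [Real.norm_eq_abs] at hI
      calc |F t| = |F (-t₀) + ∫ s in (-t₀)..t, f s| := by rw [hsplit]
        _ ≤ |F (-t₀)| + |∫ s in (-t₀)..t, f s| := abs_add_le _ _
        _ ≤ C + (A * |t| ^ (p₂ / 2)) * |t| := by
            have : (A * |t| ^ (p₂ / 2)) * |t - (-t₀)| ≤ (A * |t| ^ (p₂ / 2)) * |t| :=
              mul_le_mul_of_nonneg_left htt₀ (by positivity)
            linarith
        _ ≤ max C 0 + A / c₁ * W t := by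
            have := le_max_left C 0; linarith
end
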